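/- arXiv:1604.03024 — 6 statements merged into one kernel-verified Lean document; each statement's English description precedes it below -/
import Mathlib

section
/- Let H be a self-adjoint operator on a real Hilbert space X with exactly one negative eigenvalue: H η₀ = -σ² η₀ with σ > 0, ‖η₀‖ = 1, and H restricted to the orthogonal complement of η₀ is nonnegative. Assume moreover that H ≥ δ₀·Id on the orthogonal complement of span{η₀} ∪ Ker(H) for some δ₀ > 0, and that there exists ξ₀ ≠ 0 with ξ₀ ⊥ Ker(H) and ⟨H⁻¹ ξ₀, ξ₀⟩ < 0 (where H⁻¹ ξ₀ denotes any solution w of H w = ξ₀). Then ⟨H z, z⟩ ≥ 0 for every z ∈ D(H) with z ⊥ ξ₀. -/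
open scoped RealInnerProductSpace

/-!
The quadratic form `v ↦ ⟪H v, v⟫` is nonnegative on the hyperplane `η₀ᗮ`, so it cannot be
negative definite on a plane. A solution `w` of `H w = ξ₀` satisfies `⟪H w, w⟫ = ⟪w, ξ₀⟫ < 0`,
and `z ⊥ ξ₀` means `⟪H z, w⟫ = ⟪z, ξ₀⟫ = 0`; so `⟪H z, z⟫ < 0` would make the form negative
definite on the span of `z` and `w`.
-/

namespace LinearMap.IsSymmetric

variable {X : Type*} [NormedAddCommGroup X] [InnerProductSpace ℝ X] {T : X →ₗ[ℝ] X}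

theorem inner_map_self_linear_combination (hT : T.IsSymmetric) {x y : X}
    (hxy : ⟪T x, y⟫ = 0) (a b : ℝ) :
    ⟪T (a • x + b • y), a • x + b • y⟫ = a ^ 2 * ⟪T x, x⟫ + b ^ 2 * ⟪T y, y⟫ := by
  have hyx : ⟪T y, x⟫ = 0 := by rw [hT, real_inner_comm, hxy]
  simp only [map_add, map_smul, inner_add_left, inner_add_right, real_inner_smul_left,
    real_inner_smul_right, hxy, hyx]
  ring

/-- Otherwise `⟪w, η⟫ • z - ⟪z, η⟫ • w` would be a negative vector in `ηᗮ`. -/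
theorem inner_map_self_nonneg_of_inner_map_eq_zero (hT : T.IsSymmetric) (η : X)
    (hpos : ∀ v : X, ⟪v, η⟫ = 0 → 0 ≤ ⟪T v, v⟫) {w : X} (hw : ⟪T w, w⟫ < 0) {z : X}
    (hzw : ⟪T z, w⟫ = 0) : 0 ≤ ⟪T z, z⟫ := by
  by_contra! hz
  set a := ⟪w, η⟫
  have ha : a ≠ 0 := fun ha => hw.not_ge (hpos w ha)
  have hv : ⟪a • z + (-⟪z, η⟫) • w, η⟫ = 0 := by
    simp only [inner_add_left, real_inner_smul_left]
    ring
  have hq := hpos _ hv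
  rw [hT.inner_map_self_linear_combination hzw] at hq
  linarith [mul_pos (sq_pos_of_ne_zero ha) (neg_pos.mpr hz),
    mul_nonneg (sq_nonneg ⟪z, η⟫) (neg_nonneg.mpr hw.le)]

end LinearMap.IsSymmetric

theorem stmt0_general
    {X : Type*} [NormedAddCommGroup X] [InnerProductSpace ℝ X]
    (H : X →ₗ[ℝ] X) (hsym : ∀ x y : X, ⟪H x, y⟫ = ⟪x, H y⟫)
    (η₀ : X)
    (hpos : ∀ z : X, ⟪z, η₀⟫ = 0 → 0 ≤ ⟪H z, z⟫)
    (ξ₀ : X)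
    (hneg : ∀ w : X, H w = ξ₀ → ⟪w, ξ₀⟫ < 0)
    (hsol : ∃ w : X, H w = ξ₀) :
    ∀ z : X, ⟪z, ξ₀⟫ = 0 → 0 ≤ ⟪H z, z⟫ := by
  obtain ⟨w, hw⟩ := hsol
  have hH : H.IsSymmetric := hsym
  have hww : ⟪H w, w⟫ < 0 := by
    rw [hw, real_inner_comm]
    exact hneg w hw
  intro z hz
  have hzw : ⟪H z, w⟫ = 0 := by rw [hH, hw, hz]
  exact hH.inner_map_self_nonneg_of_inner_map_eq_zero η₀ hpos hww hzw

/-- Positivity of a self-adjoint operator with one negative eigenvalue on the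
orthogonal complement of a vector `ξ₀` with `⟪H⁻¹ ξ₀, ξ₀⟫ < 0`. -/
theorem stmt0
    {X : Type*} [NormedAddCommGroup X] [InnerProductSpace ℝ X] [CompleteSpace X]
    (H : X →ₗ[ℝ] X) (hsym : ∀ x y : X, ⟪H x, y⟫ = ⟪x, H y⟫)
    (σ : ℝ) (hσ : 0 < σ) (η₀ : X) (hη₀ : ‖η₀‖ = 1)
    (heig : H η₀ = -(σ ^ 2) • η₀)
    (hpos : ∀ z : X, ⟪z, η₀⟫ = 0 → 0 ≤ ⟪H z, z⟫)
    (δ₀ : ℝ) (hδ₀ : 0 < δ₀)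
    (hgap : ∀ z : X, ⟪z, η₀⟫ = 0 → (∀ w : X, H w = 0 → ⟪z, w⟫ = 0) →
      δ₀ * ‖z‖ ^ 2 ≤ ⟪H z, z⟫)
    (ξ₀ : X) (hξ₀ : ξ₀ ≠ 0)
    (hker : ∀ w : X, H w = 0 → ⟪ξ₀, w⟫ = 0)
    (hneg : ∀ w : X, H w = ξ₀ → ⟪w, ξ₀⟫ < 0)
    (hsol : ∃ w : X, H w = ξ₀) :
    ∀ z : X, ⟪z, ξ₀⟫ = 0 → 0 ≤ ⟪H z, z⟫ :=
  stmt0_general H hsym η₀ hpos ξ₀ hneg hsol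
end

section
/- Suppose Φ : ℝ → ℝ is twice differentiable and satisfies c² Φ'' = Φ(Φ − c) for a constant c ≠ 0. Define Ψ with Ψ' = Φ, the change of variables Ξ(η) = η − Ψ(η)/c, and suppose Ξ is a diffeomorphism onto its image with 1 − Φ(η)/c > 0. Then the function φ defined by φ(Ξ(η)) = Φ(η) satisfies the traveling-wave profile equation ((φ − c) φ_ξ)_ξ = φ on the image of Ξ. -/
/-!
Since `dξ/dη = 1 - Φ/c = (c - Φ)/c > 0`, the chain rule through the local inverse of `Ξ` gives
`φ_ξ = Φ' c/(c - Φ)`, so the flux `(φ - c) φ_ξ` is `-c Φ'` read in the variable `η`.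
Differentiating once more in `ξ` gives `-c Φ'' c/(c - Φ)`, which the profile equation
`c² Φ'' = Φ (Φ - c)` turns into `Φ = φ`.
-/

open Filter Topology

theorem HasStrictDerivAt.hasDerivAt_of_comp_eventuallyEq
    {𝕜 E : Type*} [NontriviallyNormedField 𝕜] [CompleteSpace 𝕜]
    [NormedAddCommGroup E] [NormedSpace 𝕜 E]
    {Ξ : 𝕜 → 𝕜} {a η : 𝕜} {F G : 𝕜 → E} {F' : E}
    (hΞ : HasStrictDerivAt Ξ a η) (ha : a ≠ 0) (hF : HasDerivAt F F' η)
    (hGF : ∀ᶠ x in 𝓝 η, G (Ξ x) = F x) :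
    HasDerivAt G (a⁻¹ • F') (Ξ η) := by
  set g := hΞ.localInverse Ξ a η ha
  have hg : HasDerivAt g a⁻¹ (Ξ η) := (hΞ.to_localInverse ha).hasDerivAt
  have hgΞ : g (Ξ η) = η := (hΞ.eventually_left_inverse ha).self_of_nhds
  have hg_tendsto : Tendsto g (𝓝 (Ξ η)) (𝓝 η) := by
    simpa only [hgΞ] using hg.continuousAt.tendsto
  have hG : G =ᶠ[𝓝 (Ξ η)] F ∘ g := by
    filter_upwards [hΞ.eventually_right_inverse ha, hg_tendsto.eventually hGF] with y hy hGFy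
    rw [Function.comp_apply, ← hGFy, hy]
  exact ((hgΞ.symm ▸ hF).scomp (Ξ η) hg).congr_of_eventuallyEq hG

/-- The change of variables `ξ = Ξ(η) = η - Ψ(η)/c` transforms a solution `Φ` of the
Schrödinger-type profile equation `c²Φ'' = Φ(Φ - c)` into a solution `φ` of the
Ostrovsky traveling-wave equation `((φ - c)φ_ξ)_ξ = φ` on the image of `Ξ`. -/
theorem stmt3
    (c : ℝ) (hc : c ≠ 0) (Φ Ψ φ : ℝ → ℝ)
    (hΦ : Differentiable ℝ Φ) (hΦ' : Differentiable ℝ (deriv Φ))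
    (hprofile : ∀ η : ℝ, c ^ 2 * deriv (deriv Φ) η = Φ η * (Φ η - c))
    (hΨ : Differentiable ℝ Ψ) (hΨ' : ∀ η : ℝ, deriv Ψ η = Φ η)
    (Ξ : ℝ → ℝ) (hΞ : ∀ η : ℝ, Ξ η = η - Ψ η / c)
    (hmono : ∀ η : ℝ, 1 - Φ η / c > 0)
    (hφ : ∀ η : ℝ, φ (Ξ η) = Φ η) :
    ∀ ξ ∈ Set.range Ξ, deriv (fun s => (φ s - c) * deriv φ s) ξ = φ ξ := by
  obtain rfl : Ξ = fun η => η - Ψ η / c := funext hΞ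
  have hΞ_ne (η : ℝ) : 1 - Φ η / c ≠ 0 := (hmono η).ne'
  have hΞ' (η : ℝ) : HasStrictDerivAt (fun η => η - Ψ η / c) (1 - Φ η / c) η := by
    refine hasStrictDerivAt_of_hasDerivAt_of_continuousAt (.of_forall fun x => ?_)
      (continuous_const.sub (hΦ.continuous.div_const c)).continuousAt
    exact (hasDerivAt_id x).sub (hΨ' x ▸ (hΨ x).hasDerivAt |>.div_const c)
  have hφ' (η : ℝ) :=
    (hΞ' η).hasDerivAt_of_comp_eventuallyEq (hΞ_ne η) (hΦ η).hasDerivAt (.of_forall hφ)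
  have hΦ_sub (η : ℝ) : Φ η - c = -c * (1 - Φ η / c) := by field_simp; ring
  have hflux (η : ℝ) : (φ (η - Ψ η / c) - c) * deriv φ (η - Ψ η / c) = -c * deriv Φ η := by
    rw [hφ, (hφ' η).deriv, smul_eq_mul, hΦ_sub, mul_assoc, mul_inv_cancel_left₀ (hΞ_ne η)]
  rintro _ ⟨η, rfl⟩
  rw [((hΞ' η).hasDerivAt_of_comp_eventuallyEq (hΞ_ne η)
      ((hΦ' η).hasDerivAt.const_mul (-c)) (.of_forall hflux)).deriv,
    hφ, smul_eq_mul, inv_mul_eq_iff_eq_mul₀ (hΞ_ne η)]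
  refine mul_left_cancel₀ hc ?_
  linear_combination -hprofile η - Φ η * hΦ_sub η
end

section
/- Suppose Φ : ℝ → ℝ is twice differentiable and satisfies −c² Φ'' − c Φ + Φ³ = 0 for a constant c ≠ 0. Define Ψ with Ψ' = Φ², Ξ(η) = η − Ψ(η)/c, and assume 1 − Φ(η)²/c > 0 for all η so that Ξ is a diffeomorphism onto its image. Then the function φ defined by φ(Ξ(η)) = Φ(η) satisfies ((φ² − c) φ_ξ)_ξ = φ on the image of Ξ. -/
/-!
Since `Ξ' = 1 - Φ²/c ≠ 0`, the inverse function theorem gives `φ_ξ = Φ' / (1 - Φ²/c)` along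
`Ξ`, so the flux `(φ² - c) φ_ξ` equals `-c Φ'` there. Differentiating once more through `Ξ`
gives `((φ² - c) φ_ξ)_ξ = -c Φ'' / (1 - Φ²/c)`, which is `Φ` by the profile equation.
-/

open Filter Topology

theorem HasStrictDerivAt.hasDerivAt_of_eventually_comp_eq {𝕜 : Type*}
    [NontriviallyNormedField 𝕜] [CompleteSpace 𝕜] {Ξ F φ : 𝕜 → 𝕜} {D F' η : 𝕜}
    (hΞ : HasStrictDerivAt Ξ D η) (hD : D ≠ 0) (hF : HasDerivAt F F' η)
    (hφ : ∀ᶠ x in 𝓝 η, φ (Ξ x) = F x) : HasDerivAt φ (F' / D) (Ξ η) := by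
  set g := hΞ.localInverse Ξ D η hD
  have hg : HasStrictDerivAt g D⁻¹ (Ξ η) := hΞ.to_localInverse hD
  have hgη : g (Ξ η) = η := (hΞ.hasStrictFDerivAt_equiv hD).localInverse_apply_image
  have hright : ∀ᶠ y in 𝓝 (Ξ η), Ξ (g y) = y :=
    (hΞ.hasStrictFDerivAt_equiv hD).eventually_right_inverse
  have hnear : ∀ᶠ y in 𝓝 (Ξ η), φ (Ξ (g y)) = F (g y) := by
    have hg_tendsto := hg.hasDerivAt.continuousAt.tendsto
    rw [hgη] at hg_tendsto
    exact hg_tendsto.eventually hφ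
  have hφg : φ =ᶠ[𝓝 (Ξ η)] F ∘ g :=
    (hright.and hnear).mono fun y ⟨hy, hφy⟩ => (congrArg φ hy).symm.trans hφy
  rw [div_eq_mul_inv]
  exact ((hgη ▸ hF).comp (Ξ η) hg.hasDerivAt).congr_of_eventuallyEq hφg

/-- The change of variables `ξ = Ξ(η) = η - Ψ(η)/c`, `Ψ' = Φ²`, transforms a solution `Φ`
of `-c²Φ'' - cΦ + Φ³ = 0` into a solution `φ` of the short pulse traveling-wave
equation `((φ² - c)φ_ξ)_ξ = φ` on the image of `Ξ`. -/
theorem stmt4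
    (c : ℝ) (hc : c ≠ 0) (Φ Ψ φ : ℝ → ℝ)
    (hΦ : Differentiable ℝ Φ) (hΦ' : Differentiable ℝ (deriv Φ))
    (hprofile : ∀ η : ℝ, -(c ^ 2) * deriv (deriv Φ) η - c * Φ η + (Φ η) ^ 3 = 0)
    (hΨ : Differentiable ℝ Ψ) (hΨ' : ∀ η : ℝ, deriv Ψ η = (Φ η) ^ 2)
    (Ξ : ℝ → ℝ) (hΞ : ∀ η : ℝ, Ξ η = η - Ψ η / c)
    (hmono : ∀ η : ℝ, 1 - (Φ η) ^ 2 / c > 0)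
    (hφ : ∀ η : ℝ, φ (Ξ η) = Φ η) :
    ∀ ξ ∈ Set.range Ξ, deriv (fun s => ((φ s) ^ 2 - c) * deriv φ s) ξ = φ ξ := by
  have hΨ_strict (η : ℝ) : HasStrictDerivAt Ψ (Φ η ^ 2) η :=
    hasStrictDerivAt_of_hasDerivAt_of_continuousAt (f' := fun x => Φ x ^ 2)
      (Eventually.of_forall fun x => hΨ' x ▸ (hΨ x).hasDerivAt)
      (hΦ.continuous.pow 2).continuousAt
  have hΞ_strict (η : ℝ) : HasStrictDerivAt Ξ (1 - Φ η ^ 2 / c) η := by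
    rw [funext hΞ]
    exact (hasStrictDerivAt_id η).sub ((hΨ_strict η).div_const c)
  have hφ_deriv (η : ℝ) : deriv φ (Ξ η) = deriv Φ η / (1 - Φ η ^ 2 / c) :=
    ((hΞ_strict η).hasDerivAt_of_eventually_comp_eq (hmono η).ne' (hΦ η).hasDerivAt
      (Eventually.of_forall hφ)).deriv
  have hgap (η : ℝ) : c - Φ η ^ 2 ≠ 0 := by
    intro h
    apply (hmono η).ne'
    rw [one_sub_div hc, h, zero_div]
  have hflux (η : ℝ) : (φ (Ξ η) ^ 2 - c) * deriv φ (Ξ η) = -c * deriv Φ η := by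
    have hgap_η := hgap η
    rw [hφ, hφ_deriv, one_sub_div hc]
    field_simp
    ring
  rintro _ ⟨η, rfl⟩
  have hflux_deriv := (hΞ_strict η).hasDerivAt_of_eventually_comp_eq
    (φ := fun s => (φ s ^ 2 - c) * deriv φ s) (hmono η).ne'
    ((hΦ' η).hasDerivAt.const_mul (-c)) (Eventually.of_forall hflux)
  have hgap_η := hgap η
  rw [hflux_deriv.deriv, hφ, one_sub_div hc]
  field_simp
  linear_combination hprofile η
end

section
/- Let f(x) = e^{−x}·sech(x)·tanh(x). Then f solves −f''(x) − 6·sech²(x)·f(x) = 2 f'(x) on ℝ, and lim_{x→−∞} f(x) = −2 while lim_{x→+∞} f(x) = 0. -/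
/-!
Since `e^{-x} sech x = (cosh x - sinh x) / cosh x = 1 - tanh x`, the function is
`f = tanh · (1 - tanh)`. As `tanh' = 1 - tanh² = sech²`, every derivative of `f` is a polynomial
in `tanh`, and the differential equation becomes a polynomial identity in `tanh x`. The limits
follow from `tanh → ±1` at `±∞`.
-/

open Filter Topology

namespace Real

theorem one_sub_tanh (x : ℝ) : 1 - tanh x = exp (-x) / cosh x := by
  rw [tanh_eq_sinh_div_cosh, ← cosh_sub_sinh, sub_div, div_self (cosh_pos x).ne']

theorem one_sub_tanh_sq (x : ℝ) : 1 - tanh x ^ 2 = (cosh x)⁻¹ ^ 2 := by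
  have := (cosh_pos x).ne'
  rw [tanh_eq_sinh_div_cosh]
  field_simp
  linear_combination cosh_sq x

theorem hasDerivAt_tanh (x : ℝ) : HasDerivAt tanh (1 - tanh x ^ 2) x := by
  have hcosh := (cosh_pos x).ne'
  rw [show tanh = fun y => sinh y / cosh y from funext tanh_eq_sinh_div_cosh]
  refine ((hasDerivAt_sinh x).div (hasDerivAt_cosh x) hcosh).congr_deriv ?_
  field_simp

theorem tendsto_tanh_atTop : Tendsto tanh atTop (𝓝 1) := by
  have hdiff : Tendsto (fun x => exp (-x) / cosh x) atTop (𝓝 0) :=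
    tendsto_of_tendsto_of_tendsto_of_le_of_le tendsto_const_nhds tendsto_exp_neg_atTop_nhds_zero
      (fun x => by positivity) (fun x => div_le_self (exp_pos _).le (one_le_cosh x))
  simpa [← one_sub_tanh] using hdiff.const_sub 1

theorem tendsto_tanh_atBot : Tendsto tanh atBot (𝓝 (-1)) := by
  simpa [Function.comp_def, tanh_neg] using (tendsto_tanh_atTop.comp tendsto_neg_atBot_atTop).neg

end Real

open Real

theorem hasDerivAt_tanh_mul_one_sub_tanh (x : ℝ) :
    HasDerivAt (fun y => tanh y * (1 - tanh y)) ((1 - 2 * tanh x) * (1 - tanh x ^ 2)) x :=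
  ((hasDerivAt_tanh x).mul ((hasDerivAt_tanh x).const_sub 1)).congr_deriv (by ring)

theorem hasDerivAt_one_sub_two_mul_tanh_mul_one_sub_tanh_sq (x : ℝ) :
    HasDerivAt (fun y => (1 - 2 * tanh y) * (1 - tanh y ^ 2))
      ((1 - tanh x ^ 2) * (6 * tanh x ^ 2 - 2 * tanh x - 2)) x := by
  have ht := hasDerivAt_tanh x
  exact ((ht.const_mul 2 |>.const_sub 1).mul ((ht.pow 2).const_sub 1)).congr_deriv
    (by rw [Pi.pow_apply]; ring)

/-- `f(x) = e^(-x)·sech(x)·tanh(x)` solves `-f'' - 6 sech² f = 2f'` on `ℝ`,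
with `f → -2` as `x → -∞` and `f → 0` as `x → +∞`. -/
theorem stmt11
    (f : ℝ → ℝ)
    (hf : ∀ x : ℝ, f x = Real.exp (-x) * (1 / Real.cosh x) * Real.tanh x) :
    (∀ x : ℝ, -(deriv (deriv f) x) - 6 * (1 / Real.cosh x) ^ 2 * f x = 2 * deriv f x) ∧
      Tendsto f atBot (nhds (-2)) ∧ Tendsto f atTop (nhds 0) := by
  obtain rfl : f = fun x => tanh x * (1 - tanh x) := by
    funext x
    rw [hf, one_sub_tanh]
    ring
  have hderiv : deriv (fun x => tanh x * (1 - tanh x)) =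
      fun x => (1 - 2 * tanh x) * (1 - tanh x ^ 2) :=
    funext fun x => (hasDerivAt_tanh_mul_one_sub_tanh x).deriv
  refine ⟨fun x => ?_, ?_, ?_⟩
  · rw [hderiv, (hasDerivAt_one_sub_two_mul_tanh_mul_one_sub_tanh_sq x).deriv, one_div,
      ← one_sub_tanh_sq]
    ring
  · simpa [show (-1 + -1 : ℝ) = -2 by norm_num] using
      tendsto_tanh_atBot.mul (tendsto_tanh_atBot.const_sub 1)
  · simpa using tendsto_tanh_atTop.mul (tendsto_tanh_atTop.const_sub 1)
end

section
/- Let L be a symmetric operator on an inner product space of real-valued functions that maps even functions to even functions and odd functions to odd functions. Suppose μ₁, μ₂ ∈ ℝ with μ₁ ≠ 0, μ₂ ≠ 0, and real functions u₁, v₁ (even) and u₂, v₂ (odd) satisfy: L u₁ = μ₁ u₂' − μ₂ v₂', L u₂ = μ₁ u₁' − μ₂ v₁', L v₁ = μ₂ u₂' + μ₁ v₂', L v₂ = μ₂ u₁' + μ₁ v₁', where ' is a skew-symmetric derivative operator. Then ⟨u₂', v₁⟩ = ⟨v₂', u₁⟩ and ⟨v₁', v₂⟩ = ⟨u₂', u₁⟩,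 and consequently ⟨L u₁, u₁⟩ + ⟨L v₁, v₁⟩ = 0. -/
/-!
Symmetry of `L`, tested on the pairs `(u₁, v₁)` and `(u₂, v₂)`, gives two linear relations
`μ₁ (⟪D u₂, v₁⟫ - ⟪D v₂, u₁⟫) = ± μ₂ (⟪D u₂, u₁⟫ + ⟪D v₂, v₁⟫)` whose signs differ because `D`
is skew. Since `μ₁, μ₂ ≠ 0`, both brackets vanish; these are the two identities, and
`⟪L u₁, u₁⟫ + ⟪L v₁, v₁⟫` is a linear combination of the brackets.
-/

open scoped RealInnerProductSpace

section

variable {X : Type*} [NormedAddCommGroup X] [InnerProductSpace ℝ X]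
  {L D : X →ₗ[ℝ] X} {μ₁ μ₂ : ℝ} {x y a b : X}

lemma inner_map_swap_of_skew (hD : ∀ x y : X, ⟪D x, y⟫ = -⟪x, D y⟫) (x y : X) :
    ⟪D x, y⟫ = -⟪D y, x⟫ := by
  rw [hD, real_inner_comm]

/- With `w = x + i y`, `z = a + i b` and `μ = μ₁ + i μ₂` the hypotheses say `L w = μ D z`,
and the conclusion is that `⟪L w, w⟫` is real. -/
lemma LinearMap.IsSymmetric.mul_inner_sub_eq_mul_inner_add (hL : L.IsSymmetric)
    (hx : L x = μ₁ • D a - μ₂ • D b) (hy : L y = μ₂ • D a + μ₁ • D b) :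
    μ₁ * (⟪D a, y⟫ - ⟪D b, x⟫) = μ₂ * (⟪D a, x⟫ + ⟪D b, y⟫) := by
  have h := hL x y
  rw [real_inner_comm (L y), hx, hy, inner_sub_left, inner_add_left, real_inner_smul_left,
    real_inner_smul_left, real_inner_smul_left, real_inner_smul_left] at h
  linear_combination h

lemma inner_map_self_add_inner_map_self_eq
    (hx : L x = μ₁ • D a - μ₂ • D b) (hy : L y = μ₂ • D a + μ₁ • D b) :
    ⟪L x, x⟫ + ⟪L y, y⟫ = μ₁ * (⟪D a, x⟫ + ⟪D b, y⟫) + μ₂ * (⟪D a, y⟫ - ⟪D b, x⟫) := by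
  rw [hx, hy, inner_sub_left, inner_add_left, real_inner_smul_left, real_inner_smul_left,
    real_inner_smul_left, real_inner_smul_left]
  ring

end

theorem stmt13_general
    {X : Type*} [NormedAddCommGroup X] [InnerProductSpace ℝ X]
    (L D : X →ₗ[ℝ] X)
    (hL : ∀ x y : X, ⟪L x, y⟫ = ⟪x, L y⟫)
    (hD : ∀ x y : X, ⟪D x, y⟫ = -⟪x, D y⟫)
    (μ₁ μ₂ : ℝ) (hμ₁ : μ₁ ≠ 0) (hμ₂ : μ₂ ≠ 0)
    (u₁ v₁ u₂ v₂ : X)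
    (h1 : L u₁ = μ₁ • D u₂ - μ₂ • D v₂)
    (h2 : L u₂ = μ₁ • D u₁ - μ₂ • D v₁)
    (h3 : L v₁ = μ₂ • D u₂ + μ₁ • D v₂)
    (h4 : L v₂ = μ₂ • D u₁ + μ₁ • D v₁) :
    ⟪D u₂, v₁⟫ = ⟪D v₂, u₁⟫ ∧ ⟪D v₁, v₂⟫ = ⟪D u₂, u₁⟫ ∧
      ⟪L u₁, u₁⟫ + ⟪L v₁, v₁⟫ = 0 := by
  have hswap := inner_map_swap_of_skew hD
  have e₁ := LinearMap.IsSymmetric.mul_inner_sub_eq_mul_inner_add hL h1 h3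
  have e₂ := LinearMap.IsSymmetric.mul_inner_sub_eq_mul_inner_add hL h2 h4
  rw [hswap u₁ v₂, hswap v₁ u₂, hswap u₁ u₂, hswap v₁ v₂] at e₂
  have hab : ⟪D u₂, v₁⟫ - ⟪D v₂, u₁⟫ = 0 :=
    (mul_eq_zero.1 (by linear_combination (e₁ + e₂) / 2)).resolve_left hμ₁
  have hcd : ⟪D u₂, u₁⟫ + ⟪D v₂, v₁⟫ = 0 :=
    (mul_eq_zero.1 (by linear_combination (e₂ - e₁) / 2)).resolve_left hμ₂
  refine ⟨sub_eq_zero.1 hab, ?_, ?_⟩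
  · rw [hswap v₁ v₂]
    linear_combination -hcd
  · rw [inner_map_self_add_inner_map_self_eq h1 h3, hab, hcd]
    ring

/-- Key algebraic step ruling out complex instabilities: with `L` symmetric commuting
with the parity involution `R`, `D` a skew-symmetric derivative anticommuting with `R`,
even functions `u₁, v₁` and odd functions `u₂, v₂` satisfying the linearized system,
one gets `⟪D u₂, v₁⟫ = ⟪D v₂, u₁⟫`, `⟪D v₁, v₂⟫ = ⟪D u₂, u₁⟫`, and consequently
`⟪L u₁, u₁⟫ + ⟪L v₁, v₁⟫ = 0`. -/
theorem stmt13
    {X : Type*} [NormedAddCommGroup X] [InnerProductSpace ℝ X]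
    (L D R : X →ₗ[ℝ] X)
    (hL : ∀ x y : X, ⟪L x, y⟫ = ⟪x, L y⟫)
    (hD : ∀ x y : X, ⟪D x, y⟫ = -⟪x, D y⟫)
    (hLR : ∀ x : X, L (R x) = R (L x))
    (hDR : ∀ x : X, D (R x) = -R (D x))
    (μ₁ μ₂ : ℝ) (hμ₁ : μ₁ ≠ 0) (hμ₂ : μ₂ ≠ 0)
    (u₁ v₁ u₂ v₂ : X)
    (heu₁ : R u₁ = u₁) (hev₁ : R v₁ = v₁) (hou₂ : R u₂ = -u₂) (hov₂ : R v₂ = -v₂)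
    (h1 : L u₁ = μ₁ • D u₂ - μ₂ • D v₂)
    (h2 : L u₂ = μ₁ • D u₁ - μ₂ • D v₁)
    (h3 : L v₁ = μ₂ • D u₂ + μ₁ • D v₂)
    (h4 : L v₂ = μ₂ • D u₁ + μ₁ • D v₁) :
    ⟪D u₂, v₁⟫ = ⟪D v₂, u₁⟫ ∧ ⟪D v₁, v₂⟫ = ⟪D u₂, u₁⟫ ∧
      ⟪L u₁, u₁⟫ + ⟪L v₁, v₁⟫ = 0 :=
  stmt13_general L D hL hD μ₁ μ₂ hμ₁ hμ₂ u₁ v₁ u₂ v₂ h1 h2 h3 h4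
end

section
/- Let H be a self-adjoint operator on a Hilbert space X with exactly k negative eigenvalues (k ≥ 1), with negative spectral subspace Z₀ = span{η₁, …, η_k}, and suppose H ≥ δ₀ on the orthogonal complement of span{Z₀, Ker H} for some δ₀ > 0. Let Z be a subspace with dim Z ≥ k, Z ⊥ Ker H, and ⟨H⁻¹ z, z⟩ ≤ −δ₀‖z‖² for all z ∈ Z. Then ⟨H w, w⟩ ≥ 0 for all w ∈ D(H) with w ⊥ Z. -/
open scoped RealInnerProductSpace

/-! Let `u = H⁻¹ z` for `z ∈ Z`. Since `⟪z, ηᵢ⟫ = -σᵢ² ⟪u, ηᵢ⟫`, an element of `Z` orthogonal to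
every `ηᵢ` has `u` orthogonal to every `ηᵢ`, hence `0 ≤ ⟪H u, u⟫ = ⟪u, z⟫ ≤ -δ₀ ‖z‖²`, so `z = 0`.
Thus `z ↦ (⟪z, ηᵢ⟫)ᵢ` is injective on `Z`, and bijective onto `ℝᵏ` as `dim Z ≥ k`. Given `w ⊥ Z`,
choose `z ∈ Z` so that `u = H⁻¹ z` has the same `η`-coordinates as `w`. Then `w - u ⊥ ηᵢ` and,
as `⟪H u, w⟫ = ⟪z, w⟫ = 0`,
`0 ≤ ⟪H (w - u), w - u⟫ = ⟪H w, w⟫ + ⟪u, z⟫ ≤ ⟪H w, w⟫ - δ₀ ‖z‖²`. -/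

theorem LinearMap.surjective_of_injective_of_finrank_le_rank {K V W : Type*} [DivisionRing K]
    [AddCommGroup V] [Module K V] [AddCommGroup W] [Module K W] [FiniteDimensional K W]
    {f : V →ₗ[K] W} (hf : Function.Injective f)
    (hrank : (Module.finrank K W : Cardinal) ≤ Module.rank K V) : Function.Surjective f := by
  have := FiniteDimensional.of_injective f hf
  rw [← Module.finrank_eq_rank] at hrank
  have hfinrank := le_antisymm (LinearMap.finrank_le_finrank_of_injective hf) (by exact_mod_cast hrank)
  exact (LinearMap.injective_iff_surjective_of_finrank_eq_finrank hfinrank).mp hf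

section

variable {X ι : Type*} [NormedAddCommGroup X] [InnerProductSpace ℝ X]

def innerCoords (η : ι → X) : X →ₗ[ℝ] ι → ℝ where
  toFun x i := ⟪x, η i⟫
  map_add' x y := by ext i; exact inner_add_left x y (η i)
  map_smul' c x := by ext i; exact real_inner_smul_left x (η i) c

@[simp]
theorem innerCoords_apply (η : ι → X) (x : X) (i : ι) : innerCoords η x i = ⟪x, η i⟫ :=
  rfl

theorem innerCoords_eq_zero_iff {η : ι → X} {x : X} : innerCoords η x = 0 ↔ ∀ i, ⟪x, η i⟫ = 0 :=
  funext_iff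

variable {H : X →ₗ[ℝ] X} {η : ι → X} {μ : ι → ℝ}

theorem LinearMap.IsSymmetric.innerCoords_map (hH : H.IsSymmetric)
    (heig : ∀ i, H (η i) = μ i • η i) (u : X) : innerCoords η (H u) = μ * innerCoords η u := by
  ext i
  simp only [innerCoords_apply, Pi.mul_apply, hH u (η i), heig i, real_inner_smul_right]

theorem LinearMap.IsSymmetric.innerCoords_map_eq_iff (hH : H.IsSymmetric) (heig : ∀ i, H (η i) = μ i • η i)
    (hμ : ∀ i, μ i ≠ 0) {u : X} {c : ι → ℝ} :
    innerCoords η (H u) = μ * c ↔ innerCoords η u = c := by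
  rw [hH.innerCoords_map heig]
  exact ⟨fun h ↦ funext fun i ↦ mul_left_cancel₀ (hμ i) (congrFun h i), fun h ↦ h ▸ rfl⟩

theorem LinearMap.IsSymmetric.inner_map_self_sub (hH : H.IsSymmetric) (w u : X) :
    ⟪H (w - u), w - u⟫ = ⟪H w, w⟫ - 2 * ⟪H u, w⟫ + ⟪H u, u⟫ := by
  rw [map_sub, inner_sub_left, inner_sub_right, inner_sub_right, hH w u, real_inner_comm w (H u)]
  ring

variable {Z : Submodule ℝ X} {δ : ℝ}

theorem LinearMap.IsSymmetric.innerCoords_domRestrict_injective (hH : H.IsSymmetric)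
    (heig : ∀ i, H (η i) = μ i • η i) (hμ : ∀ i, μ i ≠ 0)
    (hpos : ∀ z : X, (∀ i, ⟪z, η i⟫ = 0) → 0 ≤ ⟪H z, z⟫) (hδ : 0 < δ)
    (hinv : ∀ z ∈ Z, ∀ w : X, H w = z → ⟪w, z⟫ ≤ -δ * ‖z‖ ^ 2)
    (hsol : ∀ z ∈ Z, ∃ w : X, H w = z) :
    Function.Injective ((innerCoords η).domRestrict Z) := by
  rw [← LinearMap.ker_eq_bot, Submodule.eq_bot_iff]
  rintro ⟨z, hz⟩ hcoords
  obtain ⟨u, rfl⟩ := hsol z hz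
  have hu : innerCoords η u = 0 := by
    rw [← hH.innerCoords_map_eq_iff heig hμ, mul_zero]
    exact hcoords
  have hnonneg : 0 ≤ ⟪u, H u⟫ := real_inner_comm u (H u) ▸ hpos u (innerCoords_eq_zero_iff.mp hu)
  have hnorm : ‖H u‖ ^ 2 ≤ 0 := by nlinarith [hinv _ hz u rfl]
  simpa using hnorm

end

theorem stmt17_general
    {X : Type*} [NormedAddCommGroup X] [InnerProductSpace ℝ X]
    (H : X →ₗ[ℝ] X) (hsym : ∀ x y : X, ⟪H x, y⟫ = ⟪x, H y⟫)
    (k : ℕ) (η : Fin k → X)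
    (σ : Fin k → ℝ) (hσ : ∀ i, 0 < σ i)
    (heig : ∀ i, H (η i) = -((σ i) ^ 2) • η i)
    (hpos : ∀ z : X, (∀ i, ⟪z, η i⟫ = 0) → 0 ≤ ⟪H z, z⟫)
    (δ₀ : ℝ) (hδ₀ : 0 < δ₀)
    (Z : Submodule ℝ X) (hdim : (k : Cardinal) ≤ Module.rank ℝ Z)
    (hinv : ∀ z ∈ Z, ∀ w : X, H w = z → ⟪w, z⟫ ≤ -δ₀ * ‖z‖ ^ 2)
    (hsol : ∀ z ∈ Z, ∃ w : X, H w = z) :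
    ∀ w : X, (∀ z ∈ Z, ⟪w, z⟫ = 0) → 0 ≤ ⟪H w, w⟫ := by
  intro w hw
  have hH : H.IsSymmetric := hsym
  have hμ : ∀ i, -((σ i) ^ 2) ≠ 0 := fun i ↦ neg_ne_zero.mpr (pow_ne_zero 2 (hσ i).ne')
  have hsurj := LinearMap.surjective_of_injective_of_finrank_le_rank
    (hH.innerCoords_domRestrict_injective heig hμ hpos hδ₀ hinv hsol) (by simpa using hdim)
  obtain ⟨⟨z, hz⟩, hcoords⟩ := hsurj ((fun i ↦ -((σ i) ^ 2)) * innerCoords η w)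
  obtain ⟨u, rfl⟩ := hsol z hz
  have hu : innerCoords η u = innerCoords η w := (hH.innerCoords_map_eq_iff heig hμ).mp hcoords
  have hsub : 0 ≤ ⟪H (w - u), w - u⟫ :=
    hpos (w - u) (innerCoords_eq_zero_iff.mp (by rw [map_sub, hu, sub_self]))
  have hcross : ⟪H u, w⟫ = 0 := real_inner_comm w (H u) ▸ hw _ hz
  have hneg : ⟪H u, u⟫ ≤ 0 := by
    rw [real_inner_comm]
    nlinarith [hinv _ hz u rfl, sq_nonneg ‖H u‖]
  linarith [hH.inner_map_self_sub w u]

/-- Positivity of a self-adjoint operator with `k` negative eigenvalues on the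
orthogonal complement of a subspace `Z` of dimension at least `k`, perpendicular to
the kernel, on which `H⁻¹ ≤ -δ₀`. -/
theorem stmt17
    {X : Type*} [NormedAddCommGroup X] [InnerProductSpace ℝ X] [CompleteSpace X]
    (H : X →ₗ[ℝ] X) (hsym : ∀ x y : X, ⟪H x, y⟫ = ⟪x, H y⟫)
    (k : ℕ) (hk : 1 ≤ k) (η : Fin k → X) (honb : Orthonormal ℝ η)
    (σ : Fin k → ℝ) (hσ : ∀ i, 0 < σ i)
    (heig : ∀ i, H (η i) = -((σ i) ^ 2) • η i)
    (hpos : ∀ z : X, (∀ i, ⟪z, η i⟫ = 0) → 0 ≤ ⟪H z, z⟫)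
    (δ₀ : ℝ) (hδ₀ : 0 < δ₀)
    (hgap : ∀ z : X, (∀ i, ⟪z, η i⟫ = 0) → (∀ w : X, H w = 0 → ⟪z, w⟫ = 0) →
      δ₀ * ‖z‖ ^ 2 ≤ ⟪H z, z⟫)
    (Z : Submodule ℝ X) (hdim : (k : Cardinal) ≤ Module.rank ℝ Z)
    (hZker : ∀ z ∈ Z, ∀ w : X, H w = 0 → ⟪z, w⟫ = 0)
    (hinv : ∀ z ∈ Z, ∀ w : X, H w = z → ⟪w, z⟫ ≤ -δ₀ * ‖z‖ ^ 2)
    (hsol : ∀ z ∈ Z, ∃ w : X, H w = z) :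
    ∀ w : X, (∀ z ∈ Z, ⟪w, z⟫ = 0) → 0 ≤ ⟪H w, w⟫ :=
  stmt17_general H hsym k η σ hσ heig hpos δ₀ hδ₀ Z hdim hinv hsol
end
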